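/- arXiv:2411.06900 — 4 statements merged into one kernel-verified Lean document; each statement's English description precedes it below -/
import Mathlib

section
/- Let Γ be a finite graph on n ≥ 2 vertices without isolated vertices, and Ω a graph with a designated root v and |V(Ω)| ≥ 2. Then the domination number of the rooted product satisfies γ(Γ ∘_v Ω) ∈ {n·γ(Ω), n·γ(Ω) − n + γ(Γ)}. -/
open SimpleGraph

variable {V : Type*}

/-- `D` is a dominating set of `G`: every vertex is in `D` or adjacent to a vertex of `D`. -/
def IsDominating (G : SimpleGraph V) (D : Set V) : Prop :=
  ∀ u : V, u ∈ D ∨ ∃ d ∈ D, G.Adj u d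

/-- `D` is a total dominating set of `G`: every vertex has a neighbor in `D`. -/
def IsTotalDominating (G : SimpleGraph V) (D : Set V) : Prop :=
  ∀ u : V, ∃ d ∈ D, G.Adj u d

/-- `R` is a resolving set of `G`. -/
def IsResolving (G : SimpleGraph V) (R : Set V) : Prop :=
  ∀ u v : V, u ≠ v → ∃ r ∈ R, G.dist u r ≠ G.dist v r

/-- `D` is an independent set of `G`. -/
def IsIndependentSet (G : SimpleGraph V) (D : Set V) : Prop :=
  ∀ u ∈ D, ∀ v ∈ D, ¬ G.Adj u v

/-- the subgraph of `G` induced by `D` is connected. -/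
def InducedConnected (G : SimpleGraph V) (D : Set V) : Prop :=
  (G.induce D).Connected

/-- closed neighborhood -/
def closedNbhd (G : SimpleGraph V) (u : V) : Set V :=
  insert u (G.neighborSet u)

/-- `D` is a double dominating set of `G`: `|N[u] ∩ D| ≥ 2` for every vertex `u`. -/
def IsDoubleDominating (G : SimpleGraph V) (D : Set V) : Prop :=
  ∀ u : V, 2 ≤ (closedNbhd G u ∩ D).ncard

/-- `D` is a 2-dominating set of `G`: every vertex outside `D` has ≥ 2 neighbors in `D`. -/
def IsTwoDominating (G : SimpleGraph V) (D : Set V) : Prop :=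
  ∀ u : V, u ∉ D → 2 ≤ (G.neighborSet u ∩ D).ncard

/-- minimum cardinality of a set of vertices satisfying `P`. -/
noncomputable def minCard (P : Set V → Prop) : ℕ :=
  sInf {n : ℕ | ∃ D : Set V, P D ∧ D.ncard = n}

noncomputable def gamma (G : SimpleGraph V) : ℕ := minCard (IsDominating G)
noncomputable def gammaT (G : SimpleGraph V) : ℕ := minCard (IsTotalDominating G)
noncomputable def gammaC (G : SimpleGraph V) : ℕ :=
  minCard (fun D => IsDominating G D ∧ InducedConnected G D)
noncomputable def gammaI (G : SimpleGraph V) : ℕ :=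
  minCard (fun D => IsDominating G D ∧ IsIndependentSet G D)
noncomputable def gammaX2 (G : SimpleGraph V) : ℕ := minCard (IsDoubleDominating G)
noncomputable def gamma2 (G : SimpleGraph V) : ℕ := minCard (IsTwoDominating G)
noncomputable def mdim (G : SimpleGraph V) : ℕ := minCard (IsResolving G)
noncomputable def gammaR (G : SimpleGraph V) : ℕ :=
  minCard (fun D => IsDominating G D ∧ IsResolving G D)
noncomputable def gammaRI (G : SimpleGraph V) : ℕ :=
  minCard (fun D => IsDominating G D ∧ IsIndependentSet G D ∧ IsResolving G D)
noncomputable def gammaRT (G : SimpleGraph V) : ℕ :=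
  minCard (fun D => IsTotalDominating G D ∧ IsResolving G D)
noncomputable def gammaRC (G : SimpleGraph V) : ℕ :=
  minCard (fun D => IsDominating G D ∧ InducedConnected G D ∧ IsResolving G D)

/-- `u` and `v` are twins: `N(u) = N(v)` or `N[u] = N[v]`. -/
def AreTwins (G : SimpleGraph V) (u v : V) : Prop :=
  G.neighborSet u = G.neighborSet v ∨ closedNbhd G u = closedNbhd G v

/-- The rooted product `Γ ∘_v Ω`: a copy of `Ω` is attached at its root `v`
to every vertex of `Γ`. -/
def rootedProduct {α β : Type*} (Γ : SimpleGraph α) (Ω : SimpleGraph β) (v : β) :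
    SimpleGraph (α × β) where
  Adj p q := (p.2 = v ∧ q.2 = v ∧ Γ.Adj p.1 q.1) ∨ (p.1 = q.1 ∧ Ω.Adj p.2 q.2)
  symm := by
    constructor
    intro p q h
    rcases h with ⟨h1, h2, h3⟩ | ⟨h1, h2⟩
    · exact Or.inl ⟨h2, h1, h3.symm⟩
    · exact Or.inr ⟨h1.symm, h2.symm⟩
  loopless := by
    constructor
    intro p h
    rcases h with ⟨_, _, h⟩ | ⟨_, h⟩ <;> exact h.ne rfl

/-- Vertex type of the fractal cubic network `FCN l`. -/
def FCNVert : ℕ → Type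
  | 0 => Fin 4
  | (l + 1) => Fin 4 × FCNVert l

/-- Auxiliary vertex `(01)^{l+1}` of `FCN l` (labels `00,01,11,10` ↦ `0,1,2,3`). -/
def fcnAux : (l : ℕ) → FCNVert l
  | 0 => ((1 : Fin 4) : FCNVert 0)
  | (l + 1) => (((1 : Fin 4), fcnAux l) : FCNVert (l + 1))

/-- The designated root `10(01)^l` of `FCN l`. -/
def fcnRoot : (l : ℕ) → FCNVert l
  | 0 => ((3 : Fin 4) : FCNVert 0)
  | (l + 1) => (((3 : Fin 4), fcnAux l) : FCNVert (l + 1))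

/-- The fractal cubic network: `FCN 0 = C₄` and
`FCN (l+1) = C₄ ∘_v FCN l`, rooted at the designated root of `FCN l`. -/
def FCN : (l : ℕ) → SimpleGraph (FCNVert l)
  | 0 => cycleGraph 4
  | (l + 1) => rootedProduct (cycleGraph 4) (FCN l) (fcnRoot l)

/-!
A dominating set `D` of `Γ ∘_v Ω` meets each copy `{i} × Ω` in a set dominating `Ω` except
possibly at the root, hence of size at least `γ(Ω) - 1`. If no set dominating `Ω - v` has fewer
than `γ(Ω)` vertices, every fibre costs `γ(Ω)` and `γ(Γ ∘_v Ω) = n γ(Ω)`. Otherwise some `Q`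
with `|Q| = γ(Ω) - 1` dominates `Ω - v` but not `v`; `Q` in every copy plus a minimum dominating
set of `Γ` on the roots gives `γ(Γ ∘_v Ω) ≤ n γ(Ω) - n + γ(Γ)`. Conversely, a root not
dominated inside its own copy is dominated by a root of `D` in a copy whose fibre dominates `Ω`,
so those copies dominate `Γ`, while each other copy saves at most one vertex:
`n γ(Ω) + γ(Γ) ≤ |D| + n`.
-/

lemma minCard_le {P : Set V → Prop} {D : Set V} (h : P D) : minCard P ≤ D.ncard :=
  Nat.sInf_le ⟨D, h, rfl⟩

lemma exists_ncard_eq_minCard {P : Set V → Prop} (h : ∃ D, P D) :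
    ∃ D, P D ∧ D.ncard = minCard P :=
  let ⟨D, hD⟩ := h
  Nat.sInf_mem (s := {n | ∃ D, P D ∧ D.ncard = n}) ⟨_, D, hD, rfl⟩

lemma gamma_le_ncard {G : SimpleGraph V} {D : Set V} (h : IsDominating G D) :
    gamma G ≤ D.ncard :=
  minCard_le h

lemma exists_isDominating_ncard_eq_gamma (G : SimpleGraph V) :
    ∃ D, IsDominating G D ∧ D.ncard = gamma G :=
  exists_ncard_eq_minCard ⟨Set.univ, fun _ => Or.inl trivial⟩

lemma Set.ncard_eq_sum_ite [Fintype V] (s : Set V) [DecidablePred (· ∈ s)] :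
    s.ncard = ∑ u, if u ∈ s then 1 else 0 := by
  rw [Finset.sum_boole]
  simp [Set.ncard_eq_toFinset_card']

lemma Set.ncard_eq_sum_ncard_preimage_mk {α β : Type*} [Fintype α] [Fintype β]
    (D : Set (α × β)) : D.ncard = ∑ i, (Prod.mk i ⁻¹' D).ncard := by
  classical
  simp only [Set.ncard_eq_sum_ite D, Fintype.sum_prod_type,
    Set.ncard_eq_sum_ite (Prod.mk _ ⁻¹' D), Set.mem_preimage]

def IsDominatingExcept (G : SimpleGraph V) (v : V) (Q : Set V) : Prop :=
  ∀ u, u ≠ v → u ∈ Q ∨ ∃ d ∈ Q, G.Adj u d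

namespace IsDominatingExcept

variable {G : SimpleGraph V} {v : V} {Q : Set V}

lemma isDominating (hQ : IsDominatingExcept G v Q) (hv : v ∈ Q ∨ ∃ d ∈ Q, G.Adj v d) :
    IsDominating G Q := fun u => by
  by_cases hu : u = v
  · exact hu ▸ hv
  · exact hQ u hu

lemma isDominating_insert (hQ : IsDominatingExcept G v Q) : IsDominating G (insert v Q) :=
  fun u => by
  by_cases hu : u = v
  · exact Or.inl (hu ▸ Set.mem_insert v Q)
  · rcases hQ u hu with h | ⟨d, hd, hud⟩
    · exact Or.inl (Set.mem_insert_of_mem v h)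
    · exact Or.inr ⟨d, Set.mem_insert_of_mem v hd, hud⟩

lemma gamma_le_ncard_add_one [Finite V] (hQ : IsDominatingExcept G v Q) :
    gamma G ≤ Q.ncard + 1 :=
  (gamma_le_ncard hQ.isDominating_insert).trans (Set.ncard_insert_le v Q)

end IsDominatingExcept

namespace RootedProduct

variable {α β : Type*} {Γ : SimpleGraph α} {Ω : SimpleGraph β} {v : β}

lemma isDominatingExcept_preimage_mk {D : Set (α × β)}
    (hD : IsDominating (rootedProduct Γ Ω v) D) (i : α) :
    IsDominatingExcept Ω v (Prod.mk i ⁻¹' D) := fun b hb => by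
  rcases hD (i, b) with h | ⟨⟨j, c⟩, hd, ⟨hbv, -⟩ | ⟨rfl, hbc⟩⟩
  · exact Or.inl h
  · exact absurd hbv hb
  · exact Or.inr ⟨c, hd, hbc⟩

lemma isDominating_univ_prod {Q : Set β} (hQ : IsDominating Ω Q) :
    IsDominating (rootedProduct Γ Ω v) (Set.univ ×ˢ Q) := fun ⟨i, b⟩ => by
  rcases hQ b with h | ⟨d, hd, hbd⟩
  · exact Or.inl ⟨trivial, h⟩
  · exact Or.inr ⟨(i, d), ⟨trivial, hd⟩, Or.inr ⟨rfl, hbd⟩⟩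

lemma isDominating_univ_prod_union {Q : Set β} {S : Set α} (hQ : IsDominatingExcept Ω v Q)
    (hS : IsDominating Γ S) :
    IsDominating (rootedProduct Γ Ω v) (Set.univ ×ˢ Q ∪ S ×ˢ {v}) := fun ⟨i, b⟩ => by
  by_cases hb : b = v
  · subst hb
    rcases hS i with h | ⟨j, hj, hij⟩
    · exact Or.inl (Or.inr ⟨h, rfl⟩)
    · exact Or.inr ⟨(j, b), Or.inr ⟨hj, rfl⟩, Or.inl ⟨rfl, rfl, hij⟩⟩
  · rcases hQ b hb with h | ⟨d, hd, hbd⟩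
    · exact Or.inl (Or.inl ⟨trivial, h⟩)
    · exact Or.inr ⟨(i, d), Or.inl ⟨trivial, hd⟩, Or.inr ⟨rfl, hbd⟩⟩

lemma isDominating_setOf_isDominating_preimage_mk {D : Set (α × β)}
    (hD : IsDominating (rootedProduct Γ Ω v) D) :
    IsDominating Γ {i | IsDominating Ω (Prod.mk i ⁻¹' D)} := fun i => by
  by_cases hi : IsDominating Ω (Prod.mk i ⁻¹' D)
  · exact Or.inl hi
  have hiv : (i, v) ∉ D ∧ ∀ c, (i, c) ∈ D → ¬ Ω.Adj v c := by
    refine ⟨fun h => hi ?_, fun c hc hvc => hi ?_⟩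
    · exact (isDominatingExcept_preimage_mk hD i).isDominating (Or.inl h)
    · exact (isDominatingExcept_preimage_mk hD i).isDominating (Or.inr ⟨c, hc, hvc⟩)
  rcases hD (i, v) with h | ⟨⟨j, c⟩, hd, ⟨-, rfl, hij⟩ | ⟨rfl, hvc⟩⟩
  · exact absurd h hiv.1
  · exact Or.inr ⟨j, (isDominatingExcept_preimage_mk hD j).isDominating (Or.inl hd), hij⟩
  · exact absurd hvc (hiv.2 c hd)

variable [Fintype α]

lemma gamma_le_card_mul_gamma :
    gamma (rootedProduct Γ Ω v) ≤ Fintype.card α * gamma Ω := by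
  obtain ⟨Q, hQ, hQc⟩ := exists_isDominating_ncard_eq_gamma Ω
  calc gamma (rootedProduct Γ Ω v) ≤ (Set.univ ×ˢ Q).ncard :=
        gamma_le_ncard (isDominating_univ_prod hQ)
    _ = Fintype.card α * gamma Ω := by
      rw [Set.ncard_prod, Set.ncard_univ, Nat.card_eq_fintype_card, hQc]

lemma gamma_le_card_mul_add_gamma [Finite β] {Q : Set β} (hQ : IsDominatingExcept Ω v Q)
    (hv : v ∉ Q) :
    gamma (rootedProduct Γ Ω v) ≤ Fintype.card α * Q.ncard + gamma Γ := by
  obtain ⟨S, hS, hSc⟩ := exists_isDominating_ncard_eq_gamma Γ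
  have hdisj : Disjoint (Set.univ ×ˢ Q) (S ×ˢ {v}) :=
    Set.disjoint_left.2 fun p hpQ hpS => hv (hpS.2 ▸ hpQ.2)
  calc gamma (rootedProduct Γ Ω v) ≤ (Set.univ ×ˢ Q ∪ S ×ˢ {v}).ncard :=
        gamma_le_ncard (isDominating_univ_prod_union hQ hS)
    _ = Fintype.card α * Q.ncard + gamma Γ := by
      rw [Set.ncard_union_eq hdisj, Set.ncard_prod, Set.ncard_prod, Set.ncard_univ,
        Nat.card_eq_fintype_card, Set.ncard_singleton, mul_one, hSc]

lemma card_mul_gamma_le [Fintype β]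
    (hΩ : ∀ Q, IsDominatingExcept Ω v Q → gamma Ω ≤ Q.ncard) :
    Fintype.card α * gamma Ω ≤ gamma (rootedProduct Γ Ω v) := by
  obtain ⟨D, hD, hDc⟩ := exists_isDominating_ncard_eq_gamma (rootedProduct Γ Ω v)
  calc Fintype.card α * gamma Ω = ∑ _i : α, gamma Ω := by simp
    _ ≤ ∑ i, (Prod.mk i ⁻¹' D).ncard :=
      Finset.sum_le_sum fun i _ => hΩ _ (isDominatingExcept_preimage_mk hD i)
    _ = gamma (rootedProduct Γ Ω v) := by rw [← Set.ncard_eq_sum_ncard_preimage_mk, hDc]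

lemma card_mul_gamma_add_gamma_le [Fintype β] :
    Fintype.card α * gamma Ω + gamma Γ ≤ gamma (rootedProduct Γ Ω v) + Fintype.card α := by
  classical
  obtain ⟨D, hD, hDc⟩ := exists_isDominating_ncard_eq_gamma (rootedProduct Γ Ω v)
  set A := {i | IsDominating Ω (Prod.mk i ⁻¹' D)}
  have hfibre : ∀ i, gamma Ω + (if i ∈ A then 1 else 0) ≤ (Prod.mk i ⁻¹' D).ncard + 1 := by
    intro i
    split_ifs with hi
    · exact Nat.add_le_add_right (gamma_le_ncard hi) 1
    · simpa using (isDominatingExcept_preimage_mk hD i).gamma_le_ncard_add_one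
  calc Fintype.card α * gamma Ω + gamma Γ ≤ Fintype.card α * gamma Ω + A.ncard :=
        Nat.add_le_add_left (gamma_le_ncard (isDominating_setOf_isDominating_preimage_mk hD)) _
    _ = ∑ i, (gamma Ω + if i ∈ A then 1 else 0) := by
      rw [Finset.sum_add_distrib, Set.ncard_eq_sum_ite A]; simp
    _ ≤ ∑ i, ((Prod.mk i ⁻¹' D).ncard + 1) := Finset.sum_le_sum fun i _ => hfibre i
    _ = gamma (rootedProduct Γ Ω v) + Fintype.card α := by
      rw [Finset.sum_add_distrib, ← Set.ncard_eq_sum_ncard_preimage_mk, hDc]; simp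

end RootedProduct

theorem stmt7_general {α β : Type*} [Fintype α] [Fintype β]
    (Γ : SimpleGraph α) (Ω : SimpleGraph β) (v : β) :
    gamma (rootedProduct Γ Ω v) ∈
      ({Fintype.card α * gamma Ω,
        Fintype.card α * gamma Ω - Fintype.card α + gamma Γ} : Set ℕ) := by
  by_cases hΩ : ∀ Q, IsDominatingExcept Ω v Q → gamma Ω ≤ Q.ncard
  · exact Or.inl (le_antisymm RootedProduct.gamma_le_card_mul_gamma
    (RootedProduct.card_mul_gamma_le hΩ))
  obtain ⟨Q, hQ, hQlt⟩ : ∃ Q, IsDominatingExcept Ω v Q ∧ Q.ncard < gamma Ω := by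
    simpa using hΩ
  have hQc : Q.ncard + 1 = gamma Ω := le_antisymm hQlt hQ.gamma_le_ncard_add_one
  have hv : v ∉ Q := fun hv => (gamma_le_ncard (hQ.isDominating (Or.inl hv))).not_gt hQlt
  have hub := RootedProduct.gamma_le_card_mul_add_gamma (Γ := Γ) hQ hv
  have hlb := RootedProduct.card_mul_gamma_add_gamma_le (Γ := Γ) (Ω := Ω) (v := v)
  refine Or.inr (Set.mem_singleton_iff.2 ?_)
  rw [← hQc, Nat.mul_succ] at hlb ⊢
  omega

theorem stmt7 {α β : Type*} [Fintype α] [Fintype β]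
    (Γ : SimpleGraph α) (Ω : SimpleGraph β) (v : β)
    (hn : 2 ≤ Fintype.card α) (hiso : ∀ a : α, ∃ b : α, Γ.Adj a b)
    (hΩ : 2 ≤ Fintype.card β) :
    gamma (rootedProduct Γ Ω v) ∈
      ({Fintype.card α * gamma Ω,
        Fintype.card α * gamma Ω - Fintype.card α + gamma Γ} : Set ℕ) :=
  stmt7_general Γ Ω v
end

section
/- Let Γ and Ω be graphs without isolated vertices, with Γ having n vertices, and let v ∈ V(Ω). Then the total domination number of the rooted product satisfies γ_t(Γ ∘_v Ω) ∈ {n·γ_t(Ω) − n, γ(Γ) + n·γ_t(Ω) − n, γ_t(Γ) + n·γ_t(Ω) − n, n·γ_t(Ω)}. -/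
open SimpleGraph

variable {V : Type*}

lemma le_minCard {P : Set V → Prop} {k : ℕ} (h : ∃ D, P D) (hk : ∀ D, P D → k ≤ D.ncard) :
    k ≤ minCard P := by
  obtain ⟨D, hD, hcard⟩ := exists_ncard_eq_minCard h
  exact hcard ▸ hk D hD

lemma ncard_eq_sum_ite_mem {α : Type*} [Fintype α] (D : Set α) [DecidablePred (· ∈ D)] :
    D.ncard = ∑ a, if a ∈ D then 1 else 0 := by
  rw [Finset.sum_boole, Set.filter_mem_univ_eq_toFinset, Set.ncard_eq_toFinset_card', Nat.cast_id]

lemma sum_add_ite_mem {α : Type*} [Fintype α] (c : ℕ) (D : Set α) [DecidablePred (· ∈ D)] :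
    ∑ a, (c + if a ∈ D then 1 else 0) = Fintype.card α * c + D.ncard := by
  rw [Finset.sum_add_distrib, ← ncard_eq_sum_ite_mem, Finset.sum_const, Finset.card_univ,
    smul_eq_mul]

lemma ncard_eq_sum_ncard_preimage_prodMk {α β : Type*} [Fintype α] [Fintype β]
    (S : Set (α × β)) : S.ncard = ∑ a, (Prod.mk a ⁻¹' S).ncard := by
  classical
  simp only [ncard_eq_sum_ite_mem, Fintype.sum_prod_type, Set.mem_preimage]

section TotalDomination

variable {G : SimpleGraph V}

def IsTotalDominatingExcept (G : SimpleGraph V) (v : V) (W : Set V) : Prop :=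
  ∀ u, u ≠ v → ∃ d ∈ W, G.Adj u d

/- Cheapest fibres over a copy in `Γ ∘_v Ω`: one whose root is dominated from a neighbouring
copy (`gammaTExcept`), one that also contains its root and so dominates the neighbouring roots
(`gammaTExceptMem`), and one that dominates and contains its own root (`gammaTMem`). -/
noncomputable def gammaTExcept (G : SimpleGraph V) (v : V) : ℕ :=
  minCard (IsTotalDominatingExcept G v)

/- Cheapest fibres over a copy in `Γ ∘_v Ω`: one whose root is dominated from a neighbouring
copy (`gammaTExcept`), one that also contains its root and so dominates the neighbouring roots
(`gammaTExceptMem`), and one that dominates and contains its own root (`gammaTMem`). -/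
noncomputable def gammaTExceptMem (G : SimpleGraph V) (v : V) : ℕ :=
  minCard fun W => IsTotalDominatingExcept G v W ∧ v ∈ W

noncomputable def gammaTMem (G : SimpleGraph V) (v : V) : ℕ :=
  minCard fun W => IsTotalDominating G W ∧ v ∈ W

lemma isTotalDominating_univ (hG : ∀ u, ∃ w, G.Adj u w) : IsTotalDominating G Set.univ :=
  fun u => (hG u).imp fun _ hw => ⟨trivial, hw⟩

lemma IsTotalDominating.isTotalDominatingExcept {W : Set V} (hW : IsTotalDominating G W)
    (v : V) : IsTotalDominatingExcept G v W :=
  fun u _ => hW u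

lemma IsTotalDominatingExcept.mono {v : V} {W W' : Set V} (hW : IsTotalDominatingExcept G v W)
    (h : W ⊆ W') : IsTotalDominatingExcept G v W' :=
  fun u hu => (hW u hu).imp fun _ hd => ⟨h hd.1, hd.2⟩

lemma IsTotalDominatingExcept.isTotalDominating {v : V} {W : Set V}
    (hW : IsTotalDominatingExcept G v W) (hv : ∃ d ∈ W, G.Adj v d) : IsTotalDominating G W := by
  intro u
  obtain rfl | hu := eq_or_ne u v
  exacts [hv, hW u hu]

lemma gammaT_le_gammaTExcept_add_one (hG : ∀ u, ∃ w, G.Adj u w) (v : V) :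
    gammaT G ≤ gammaTExcept G v + 1 := by
  obtain ⟨W, hW, hcard⟩ := exists_ncard_eq_minCard
    ⟨Set.univ, (isTotalDominating_univ hG).isTotalDominatingExcept v⟩
  obtain ⟨w, hvw⟩ := hG v
  have hWw : IsTotalDominating G (insert w W) :=
    (hW.mono (Set.subset_insert w W)).isTotalDominating ⟨w, Set.mem_insert w W, hvw⟩
  exact (minCard_le hWw).trans ((Set.ncard_insert_le w W).trans_eq (congrArg (· + 1) hcard))

end TotalDomination

section RootedProduct

variable {α β : Type*} {Γ : SimpleGraph α} {Ω : SimpleGraph β} {v : β}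

lemma isTotalDominating_rootedProduct_iff {S : Set (α × β)} :
    IsTotalDominating (rootedProduct Γ Ω v) S ↔ ∀ a,
      IsTotalDominatingExcept Ω v (Prod.mk a ⁻¹' S) ∧
        ((∃ d ∈ Prod.mk a ⁻¹' S, Ω.Adj v d) ∨ ∃ a', Γ.Adj a a' ∧ (a', v) ∈ S) := by
  constructor
  · intro hS a
    refine ⟨fun b hb => ?_, ?_⟩
    · obtain ⟨⟨a', d⟩, hd, ⟨hb', -⟩ | ⟨rfl, hbd⟩⟩ := hS (a, b)
      exacts [absurd hb' hb, ⟨d, hd, hbd⟩]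
    · obtain ⟨⟨a', d⟩, hd, ⟨-, rfl, haa'⟩ | ⟨rfl, hvd⟩⟩ := hS (a, v)
      exacts [Or.inr ⟨a', haa', hd⟩, Or.inl ⟨d, hd, hvd⟩]
  · rintro hS ⟨a, b⟩
    obtain rfl | hb := eq_or_ne b v
    · obtain ⟨d, hd, hvd⟩ | ⟨a', haa', ha'⟩ := (hS a).2
      exacts [⟨(a, d), hd, Or.inr ⟨rfl, hvd⟩⟩, ⟨(a', b), ha', Or.inl ⟨rfl, rfl, haa'⟩⟩]
    · obtain ⟨d, hd, hbd⟩ := (hS a).1 b hb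
      exact ⟨(a, d), hd, Or.inr ⟨rfl, hbd⟩⟩

lemma IsTotalDominating.isTotalDominatingExcept_preimage_prodMk {S : Set (α × β)}
    (hS : IsTotalDominating (rootedProduct Γ Ω v) S) (a : α) :
    IsTotalDominatingExcept Ω v (Prod.mk a ⁻¹' S) :=
  (isTotalDominating_rootedProduct_iff.1 hS a).1

lemma IsTotalDominating.isTotalDominating_preimage_prodMk {S : Set (α × β)}
    (hS : IsTotalDominating (rootedProduct Γ Ω v) S) {a : α}
    (ha : ∀ a', Γ.Adj a a' → (a', v) ∉ S) : IsTotalDominating Ω (Prod.mk a ⁻¹' S) :=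
  let h := isTotalDominating_rootedProduct_iff.1 hS a
  h.1.isTotalDominating (h.2.resolve_right fun ⟨a', haa', ha'⟩ => ha a' haa' ha')

lemma le_gammaT_rootedProduct (hΩ : ∀ b, ∃ c, Ω.Adj b c) {k : ℕ}
    (hk : ∀ S, IsTotalDominating (rootedProduct Γ Ω v) S → k ≤ S.ncard) :
    k ≤ gammaT (rootedProduct Γ Ω v) :=
  le_minCard ⟨Set.univ, isTotalDominating_univ fun p =>
    let ⟨c, hc⟩ := hΩ p.2
    ⟨(p.1, c), Or.inr ⟨rfl, hc⟩⟩⟩ hk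

variable [Fintype α] [Fintype β]

lemma gammaT_rootedProduct_le_sum (F : α → Set β)
    (hF : ∀ a, IsTotalDominatingExcept Ω v (F a))
    (hroot : ∀ a, (∃ d ∈ F a, Ω.Adj v d) ∨ ∃ a', Γ.Adj a a' ∧ v ∈ F a') :
    gammaT (rootedProduct Γ Ω v) ≤ ∑ a, (F a).ncard :=
  (minCard_le (isTotalDominating_rootedProduct_iff (S := {p | p.2 ∈ F p.1}).2
    fun a => ⟨hF a, hroot a⟩)).trans_eq (ncard_eq_sum_ncard_preimage_prodMk _)

lemma gammaT_rootedProduct_le_mul_gammaT (hΩ : ∀ b, ∃ c, Ω.Adj b c) :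
    gammaT (rootedProduct Γ Ω v) ≤ Fintype.card α * gammaT Ω := by
  obtain ⟨W, hW, hcard : W.ncard = gammaT Ω⟩ :=
    exists_ncard_eq_minCard ⟨Set.univ, isTotalDominating_univ hΩ⟩
  calc gammaT (rootedProduct Γ Ω v) ≤ ∑ _a : α, W.ncard :=
        gammaT_rootedProduct_le_sum (fun _ => W) (fun _ => hW.isTotalDominatingExcept v)
          fun _ => Or.inl (hW v)
    _ = Fintype.card α * gammaT Ω := by
        rw [Finset.sum_const, Finset.card_univ, smul_eq_mul, hcard]

lemma gammaT_rootedProduct_le_mul_gammaTExceptMem (hΓ : ∀ a, ∃ a', Γ.Adj a a')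
    (hΩ : ∀ b, ∃ c, Ω.Adj b c) :
    gammaT (rootedProduct Γ Ω v) ≤ Fintype.card α * gammaTExceptMem Ω v := by
  obtain ⟨W, ⟨hW, hvW⟩, hcard : W.ncard = gammaTExceptMem Ω v⟩ := exists_ncard_eq_minCard
    (P := fun W => IsTotalDominatingExcept Ω v W ∧ v ∈ W)
    ⟨Set.univ, (isTotalDominating_univ hΩ).isTotalDominatingExcept v, Set.mem_univ v⟩
  calc gammaT (rootedProduct Γ Ω v) ≤ ∑ _a : α, W.ncard :=
        gammaT_rootedProduct_le_sum (fun _ => W) (fun _ => hW)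
          fun a => Or.inr ((hΓ a).imp fun _ haa' => ⟨haa', hvW⟩)
    _ = Fintype.card α * gammaTExceptMem Ω v := by
        rw [Finset.sum_const, Finset.card_univ, smul_eq_mul, hcard]

lemma gammaT_rootedProduct_le_mul_gammaTExcept_add_gamma (hΩ : ∀ b, ∃ c, Ω.Adj b c)
    (h : gammaTMem Ω v ≤ gammaTExcept Ω v + 1) :
    gammaT (rootedProduct Γ Ω v) ≤ Fintype.card α * gammaTExcept Ω v + gamma Γ := by
  classical
  obtain ⟨D, hD, hDcard : D.ncard = gamma Γ⟩ := exists_ncard_eq_minCard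
    (P := IsDominating Γ) ⟨Set.univ, fun _ => Or.inl trivial⟩
  obtain ⟨W, hW, hWcard : W.ncard = gammaTExcept Ω v⟩ := exists_ncard_eq_minCard
    ⟨Set.univ, (isTotalDominating_univ hΩ).isTotalDominatingExcept v⟩
  obtain ⟨W', ⟨hW', hvW'⟩, hW'card : W'.ncard = gammaTMem Ω v⟩ := exists_ncard_eq_minCard
    (P := fun W => IsTotalDominating Ω W ∧ v ∈ W) ⟨Set.univ, isTotalDominating_univ hΩ, trivial⟩
  let F a := if a ∈ D then W' else W
  have hF : ∀ a, IsTotalDominatingExcept Ω v (F a) := fun a => by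
    by_cases ha : a ∈ D
    · simpa [F, ha] using hW'.isTotalDominatingExcept v
    · simpa [F, ha] using hW
  have hroot : ∀ a, (∃ d ∈ F a, Ω.Adj v d) ∨ ∃ a', Γ.Adj a a' ∧ v ∈ F a' := fun a => by
    by_cases ha : a ∈ D
    · exact Or.inl (by simpa [F, ha] using hW' v)
    · obtain ⟨a', ha', haa'⟩ := (hD a).resolve_left ha
      exact Or.inr ⟨a', haa', by simpa [F, ha'] using hvW'⟩
  calc gammaT (rootedProduct Γ Ω v) ≤ ∑ a, (F a).ncard := gammaT_rootedProduct_le_sum F hF hroot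
    _ ≤ ∑ a, (gammaTExcept Ω v + if a ∈ D then 1 else 0) := Finset.sum_le_sum fun a _ => by
        by_cases ha : a ∈ D
        · simpa [F, ha, hW'card] using h
        · simp [F, ha, hWcard]
    _ = Fintype.card α * gammaTExcept Ω v + gamma Γ := by rw [sum_add_ite_mem, hDcard]

lemma gammaT_rootedProduct_le_mul_gammaTExcept_add_gammaT (hΓ : ∀ a, ∃ a', Γ.Adj a a')
    (hΩ : ∀ b, ∃ c, Ω.Adj b c) :
    gammaT (rootedProduct Γ Ω v) ≤ Fintype.card α * gammaTExcept Ω v + gammaT Γ := by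
  classical
  obtain ⟨T, hT, hTcard : T.ncard = gammaT Γ⟩ :=
    exists_ncard_eq_minCard ⟨Set.univ, isTotalDominating_univ hΓ⟩
  obtain ⟨W, hW, hWcard : W.ncard = gammaTExcept Ω v⟩ := exists_ncard_eq_minCard
    ⟨Set.univ, (isTotalDominating_univ hΩ).isTotalDominatingExcept v⟩
  let F a := if a ∈ T then insert v W else W
  have hF : ∀ a, IsTotalDominatingExcept Ω v (F a) := fun a => by
    by_cases ha : a ∈ T
    · simpa [F, ha] using hW.mono (Set.subset_insert v W)
    · simpa [F, ha] using hW
  have hroot : ∀ a, ∃ a', Γ.Adj a a' ∧ v ∈ F a' := fun a => by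
    obtain ⟨a', ha', haa'⟩ := hT a
    exact ⟨a', haa', by simp [F, ha']⟩
  calc gammaT (rootedProduct Γ Ω v) ≤ ∑ a, (F a).ncard :=
        gammaT_rootedProduct_le_sum F hF fun a => Or.inr (hroot a)
    _ ≤ ∑ a, (gammaTExcept Ω v + if a ∈ T then 1 else 0) := Finset.sum_le_sum fun a _ => by
        by_cases ha : a ∈ T
        · simpa [F, ha, hWcard] using Set.ncard_insert_le v W
        · simp [F, ha, hWcard]
    _ = Fintype.card α * gammaTExcept Ω v + gammaT Γ := by rw [sum_add_ite_mem, hTcard]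

lemma mul_gammaTExcept_le_ncard {S : Set (α × β)}
    (hS : IsTotalDominating (rootedProduct Γ Ω v) S) :
    Fintype.card α * gammaTExcept Ω v ≤ S.ncard := by
  calc Fintype.card α * gammaTExcept Ω v = Finset.univ.card • gammaTExcept Ω v := by
        rw [Finset.card_univ, smul_eq_mul]
    _ ≤ ∑ a, (Prod.mk a ⁻¹' S).ncard := Finset.card_nsmul_le_sum _ _ _ fun a _ =>
        minCard_le (hS.isTotalDominatingExcept_preimage_prodMk a)
    _ = S.ncard := (ncard_eq_sum_ncard_preimage_prodMk S).symm

lemma mul_gammaTExcept_add_gamma_le_ncard (h₁ : gammaTExcept Ω v < gammaTExceptMem Ω v)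
    (h₂ : gammaTExcept Ω v < gammaT Ω) {S : Set (α × β)}
    (hS : IsTotalDominating (rootedProduct Γ Ω v) S) :
    Fintype.card α * gammaTExcept Ω v + gamma Γ ≤ S.ncard := by
  classical
  set R : Set α := {a | (a, v) ∈ S}
  set X : Set α := {a | ∀ a', Γ.Adj a a' → a' ∉ R}
  have hdom : IsDominating Γ (R ∪ X) := fun a => by
    by_cases ha : a ∈ X
    · exact Or.inl (Or.inr ha)
    · obtain ⟨a', haa', ha'⟩ : ∃ a', Γ.Adj a a' ∧ a' ∈ R := by simpa [X] using ha
      exact Or.inr ⟨a', Or.inl ha', haa'⟩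
  have hfiber : ∀ a, gammaTExcept Ω v + (if a ∈ R ∪ X then 1 else 0) ≤
      (Prod.mk a ⁻¹' S).ncard := fun a => by
    have hexcept := hS.isTotalDominatingExcept_preimage_prodMk a
    by_cases ha : a ∈ R ∪ X
    · rw [if_pos ha]
      rcases ha with ha | ha
      · exact h₁.trans_le (minCard_le ⟨hexcept, ha⟩)
      · exact h₂.trans_le (minCard_le (hS.isTotalDominating_preimage_prodMk ha))
    · rw [if_neg ha]
      exact minCard_le hexcept
  calc Fintype.card α * gammaTExcept Ω v + gamma Γ
      ≤ Fintype.card α * gammaTExcept Ω v + (R ∪ X).ncard := by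
        gcongr; exact minCard_le hdom
    _ = ∑ a, (gammaTExcept Ω v + if a ∈ R ∪ X then 1 else 0) := (sum_add_ite_mem _ _).symm
    _ ≤ ∑ a, (Prod.mk a ⁻¹' S).ncard := Finset.sum_le_sum fun a _ => hfiber a
    _ = S.ncard := (ncard_eq_sum_ncard_preimage_prodMk S).symm

lemma mul_gammaTExcept_add_gammaT_le_ncard (hΓ : ∀ a, ∃ a', Γ.Adj a a')
    (h₁ : gammaTExcept Ω v < gammaTExceptMem Ω v) (h₂ : gammaTExcept Ω v < gammaT Ω)
    (h₃ : gammaTExcept Ω v + 1 < gammaTMem Ω v) {S : Set (α × β)}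
    (hS : IsTotalDominating (rootedProduct Γ Ω v) S) :
    Fintype.card α * gammaTExcept Ω v + gammaT Γ ≤ S.ncard := by
  classical
  set R : Set α := {a | (a, v) ∈ S}
  set X : Set α := {a | ∀ a', Γ.Adj a a' → a' ∉ R}
  choose g hg using hΓ
  have htot : IsTotalDominating Γ (R ∪ g '' X) := fun a => by
    by_cases ha : a ∈ X
    · exact ⟨g a, Or.inr (Set.mem_image_of_mem g ha), hg a⟩
    · obtain ⟨a', haa', ha'⟩ : ∃ a', Γ.Adj a a' ∧ a' ∈ R := by simpa [X] using ha
      exact ⟨a', Or.inl ha', haa'⟩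
  have hfiber : ∀ a, gammaTExcept Ω v + (if a ∈ R then 1 else 0) + (if a ∈ X then 1 else 0) ≤
      (Prod.mk a ⁻¹' S).ncard := fun a => by
    have hexcept := hS.isTotalDominatingExcept_preimage_prodMk a
    by_cases haR : a ∈ R <;> by_cases haX : a ∈ X <;> simp only [haR, haX, if_true, if_false]
    · exact h₃.trans_le (minCard_le ⟨hS.isTotalDominating_preimage_prodMk haX, haR⟩)
    · exact h₁.trans_le (minCard_le ⟨hexcept, haR⟩)
    · exact h₂.trans_le (minCard_le (hS.isTotalDominating_preimage_prodMk haX))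
    · exact minCard_le hexcept
  calc Fintype.card α * gammaTExcept Ω v + gammaT Γ
      ≤ Fintype.card α * gammaTExcept Ω v + R.ncard + X.ncard := by
        rw [add_assoc]
        gcongr
        exact (minCard_le htot).trans
          ((Set.ncard_union_le _ _).trans (Nat.add_le_add_left (Set.ncard_image_le X.toFinite) _))
    _ = ∑ a, (gammaTExcept Ω v + (if a ∈ R then 1 else 0) + if a ∈ X then 1 else 0) := by
        rw [Finset.sum_add_distrib, sum_add_ite_mem, ← ncard_eq_sum_ite_mem]
    _ ≤ ∑ a, (Prod.mk a ⁻¹' S).ncard := Finset.sum_le_sum fun a _ => hfiber a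
    _ = S.ncard := (ncard_eq_sum_ncard_preimage_prodMk S).symm

theorem gammaT_rootedProduct_eq_mul_gammaT (hΩ : ∀ b, ∃ c, Ω.Adj b c)
    (h : gammaT Ω ≤ gammaTExcept Ω v) :
    gammaT (rootedProduct Γ Ω v) = Fintype.card α * gammaT Ω :=
  le_antisymm (gammaT_rootedProduct_le_mul_gammaT hΩ) <| le_gammaT_rootedProduct hΩ fun _ hS =>
    (Nat.mul_le_mul_left _ h).trans (mul_gammaTExcept_le_ncard hS)

theorem gammaT_rootedProduct_eq_mul_gammaTExcept (hΓ : ∀ a, ∃ a', Γ.Adj a a')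
    (hΩ : ∀ b, ∃ c, Ω.Adj b c) (h : gammaTExceptMem Ω v ≤ gammaTExcept Ω v) :
    gammaT (rootedProduct Γ Ω v) = Fintype.card α * gammaTExcept Ω v :=
  le_antisymm ((gammaT_rootedProduct_le_mul_gammaTExceptMem hΓ hΩ).trans
    (Nat.mul_le_mul_left _ h)) (le_gammaT_rootedProduct hΩ fun _ => mul_gammaTExcept_le_ncard)

theorem gammaT_rootedProduct_eq_mul_gammaTExcept_add_gamma (hΩ : ∀ b, ∃ c, Ω.Adj b c)
    (h₁ : gammaTExcept Ω v < gammaTExceptMem Ω v) (h₂ : gammaTExcept Ω v < gammaT Ω)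
    (h₃ : gammaTMem Ω v ≤ gammaTExcept Ω v + 1) :
    gammaT (rootedProduct Γ Ω v) = Fintype.card α * gammaTExcept Ω v + gamma Γ :=
  le_antisymm (gammaT_rootedProduct_le_mul_gammaTExcept_add_gamma hΩ h₃)
    (le_gammaT_rootedProduct hΩ fun _ => mul_gammaTExcept_add_gamma_le_ncard h₁ h₂)

theorem gammaT_rootedProduct_eq_mul_gammaTExcept_add_gammaT (hΓ : ∀ a, ∃ a', Γ.Adj a a')
    (hΩ : ∀ b, ∃ c, Ω.Adj b c) (h₁ : gammaTExcept Ω v < gammaTExceptMem Ω v)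
    (h₂ : gammaTExcept Ω v < gammaT Ω) (h₃ : gammaTExcept Ω v + 1 < gammaTMem Ω v) :
    gammaT (rootedProduct Γ Ω v) = Fintype.card α * gammaTExcept Ω v + gammaT Γ :=
  le_antisymm (gammaT_rootedProduct_le_mul_gammaTExcept_add_gammaT hΓ hΩ)
    (le_gammaT_rootedProduct hΩ fun _ => mul_gammaTExcept_add_gammaT_le_ncard hΓ h₁ h₂ h₃)

end RootedProduct

theorem stmt8 {α β : Type*} [Fintype α] [Fintype β]
    (Γ : SimpleGraph α) (Ω : SimpleGraph β) (v : β)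
    (hisoΓ : ∀ a : α, ∃ b : α, Γ.Adj a b)
    (hisoΩ : ∀ a : β, ∃ b : β, Ω.Adj a b) :
    gammaT (rootedProduct Γ Ω v) ∈
      ({Fintype.card α * gammaT Ω - Fintype.card α,
        gamma Γ + Fintype.card α * gammaT Ω - Fintype.card α,
        gammaT Γ + Fintype.card α * gammaT Ω - Fintype.card α,
        Fintype.card α * gammaT Ω} : Set ℕ) := by
  simp only [Set.mem_insert_iff, Set.mem_singleton_iff]
  by_cases h₂ : gammaT Ω ≤ gammaTExcept Ω v
  · exact Or.inr <| Or.inr <| Or.inr <| gammaT_rootedProduct_eq_mul_gammaT hisoΩ h₂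
  have ht : gammaT Ω = gammaTExcept Ω v + 1 := by
    have := gammaT_le_gammaTExcept_add_one hisoΩ v
    omega
  rw [ht, Nat.mul_succ]
  by_cases h₁ : gammaTExceptMem Ω v ≤ gammaTExcept Ω v
  · left
    rw [gammaT_rootedProduct_eq_mul_gammaTExcept hisoΓ hisoΩ h₁]
    omega
  by_cases h₃ : gammaTMem Ω v ≤ gammaTExcept Ω v + 1
  · right; left
    rw [gammaT_rootedProduct_eq_mul_gammaTExcept_add_gamma hisoΩ (by omega) (by omega) h₃]
    omega
  · right; right; left
    rw [gammaT_rootedProduct_eq_mul_gammaTExcept_add_gammaT hisoΓ hisoΩ (by omega) (by omega)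
      (by omega)]
    omega
end

section
/- The independent domination number of the fractal cubic network satisfies γ_i(FCN(l)) = 4·γ_i(FCN(l−1)) − 2 for all l ≥ 1, where γ_i(FCN(0)) = 2. -/
open SimpleGraph

variable {V : Type*}

/-!
`FCN (l + 1)` is four copies of `FCN l` glued along a 4-cycle through their roots `v`, and its own
root and auxiliary vertex are the copies of the auxiliary vertex `a` of `FCN l` in copies 3 and 1.
So the induction tracks a version `A` of the independent domination number relative to the
terminals `v, a`, in which each undominated terminal costs one. Restricting an independent set of
the glued graph to the copies costs `A` per copy, minus one for each copy whose root is dominated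
only across the cycle. Such copies are neighbours in `C₄` of the independent set of copies whose
root is chosen, and an independent set of `C₄` has at most two neighbours; hence the new value is
at least `4 A - 2`. Alternating copies that contain their root with copies that leave it to their
neighbours attains `4 A - 2`.
-/

def Dominates (G : SimpleGraph V) (D : Set V) (x : V) : Prop :=
  x ∈ D ∨ ∃ d ∈ D, G.Adj x d

def ofFibers {α β : Type*} (W : α → Set β) : Set (α × β) :=
  {p | p.2 ∈ W p.1}

theorem ncard_ofFibers {α β : Type*} [Fintype α] [Finite β] (W : α → Set β) :
    (ofFibers W).ncard = ∑ i, (W i).ncard := by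
  let e : ofFibers W ≃ Σ i, W i :=
    { toFun p := ⟨p.1.1, p.1.2, p.2⟩
      invFun q := ⟨(q.1, q.2.1), q.2.2⟩
      left_inv _ := rfl
      right_inv _ := rfl }
  simp only [← Nat.card_coe_set_eq, Nat.card_congr e, Nat.card_sigma]

section RootedProduct

variable {α β : Type*} {Γ : SimpleGraph α} {Ω : SimpleGraph β} {v : β}

theorem IsIndependentSet.preimage_mk {D : Set (α × β)}
    (hD : IsIndependentSet (rootedProduct Γ Ω v) D) (i : α) :
    IsIndependentSet Ω (Prod.mk i ⁻¹' D) :=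
  fun x hx y hy hxy => hD (i, x) hx (i, y) hy (Or.inr ⟨rfl, hxy⟩)

theorem isIndependentSet_ofFibers {W : α → Set β} (hW : ∀ i, IsIndependentSet Ω (W i))
    (hroot : ∀ i j, Γ.Adj i j → v ∈ W i → v ∉ W j) :
    IsIndependentSet (rootedProduct Γ Ω v) (ofFibers W) := by
  rintro ⟨i, x⟩ hx ⟨j, y⟩ hy (⟨rfl, rfl, hij⟩ | ⟨rfl, hxy⟩)
  · exact hroot i j hij hx hy
  · exact hW i x hx y hy hxy

theorem Dominates.rootedProduct_mk {D : Set (α × β)} {i : α} {x : β}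
    (h : Dominates Ω (Prod.mk i ⁻¹' D) x) : Dominates (rootedProduct Γ Ω v) D (i, x) := by
  rcases h with h | ⟨d, hd, hxd⟩
  · exact Or.inl h
  · exact Or.inr ⟨(i, d), hd, Or.inr ⟨rfl, hxd⟩⟩

theorem dominates_rootedProduct_iff_of_ne {D : Set (α × β)} {i : α} {x : β} (hx : x ≠ v) :
    Dominates (rootedProduct Γ Ω v) D (i, x) ↔ Dominates Ω (Prod.mk i ⁻¹' D) x := by
  refine ⟨?_, Dominates.rootedProduct_mk⟩
  rintro (h | ⟨⟨j, d⟩, hd, ⟨rfl, -, -⟩ | ⟨rfl, hxd⟩⟩)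
  · exact Or.inl h
  · exact absurd rfl hx
  · exact Or.inr ⟨d, hd, hxd⟩

theorem dominates_rootedProduct_of_adj {D : Set (α × β)} {i j : α} (hij : Γ.Adj i j)
    (hj : (j, v) ∈ D) : Dominates (rootedProduct Γ Ω v) D (i, v) :=
  Or.inr ⟨(j, v), hj, Or.inl ⟨rfl, rfl, hij⟩⟩

theorem dominates_ofFibers_of_adj {W : α → Set β} {i j : α} (hij : Γ.Adj i j) (hj : v ∈ W j)
    {x : β} (hx : x ≠ v → Dominates Ω (W i) x) :
    Dominates (rootedProduct Γ Ω v) (ofFibers W) (i, x) := by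
  obtain rfl | hxv := eq_or_ne x v
  · exact dominates_rootedProduct_of_adj hij hj
  · exact (hx hxv).rootedProduct_mk

theorem exists_adj_of_dominates_root {D : Set (α × β)} {i : α}
    (h : Dominates (rootedProduct Γ Ω v) D (i, v)) (hi : ¬ Dominates Ω (Prod.mk i ⁻¹' D) v) :
    ∃ j, (j, v) ∈ D ∧ Γ.Adj i j := by
  rcases h with h | ⟨⟨j, d⟩, hd, ⟨-, rfl, hij⟩ | ⟨rfl, hvd⟩⟩
  · exact absurd (Or.inl h) hi
  · exact ⟨j, hd, hij⟩
  · exact absurd (Or.inr ⟨d, hd, hvd⟩) hi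

end RootedProduct

theorem card_filter_exists_adj_cycleGraph_four_le_two (T : Finset (Fin 4))
    (hT : ∀ i ∈ T, ∀ j ∈ T, ¬ (cycleGraph 4).Adj i j) :
    (Finset.univ.filter fun i => ∃ j ∈ T, (cycleGraph 4).Adj i j).card ≤ 2 := by
  revert T; decide

open scoped Classical in
/-- `A` is the least value of `|D|` plus the number of undominated terminals among `v, a`, over
independent sets `D` dominating all other vertices; the three witnesses attain it in the shapes
that gluing copies at `v` requires. -/
structure IsTerminalIndepDomNumber (G : SimpleGraph V) (v a : V) (A : ℕ) : Prop where
  le_ncard_add : ∀ D, IsIndependentSet G D → (∀ x, x ≠ v → x ≠ a → Dominates G D x) →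
    A ≤ D.ncard + (if Dominates G D v then 0 else 1) + (if Dominates G D a then 0 else 1)
  exists_mem_mem : ∃ S, IsIndependentSet G S ∧ (∀ x, Dominates G S x) ∧
    v ∈ S ∧ a ∈ S ∧ S.ncard ≤ A
  exists_notMem_mem : ∃ S, IsIndependentSet G S ∧ (∀ x, x ≠ v → Dominates G S x) ∧
    v ∉ S ∧ a ∈ S ∧ S.ncard + 1 ≤ A
  exists_mem_notMem : ∃ S, IsIndependentSet G S ∧ (∀ x, x ≠ a → Dominates G S x) ∧
    v ∈ S ∧ a ∉ S ∧ S.ncard + 1 ≤ A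

theorem IsTerminalIndepDomNumber.gammaI_eq {G : SimpleGraph V} {v a : V} {A : ℕ}
    (h : IsTerminalIndepDomNumber G v a A) : gammaI G = A := by
  obtain ⟨S, hS, hSdom, -, -, hSA⟩ := h.exists_mem_mem
  have hmem : S.ncard ∈ {n | ∃ D, (IsDominating G D ∧ IsIndependentSet G D) ∧ D.ncard = n} :=
    ⟨S, ⟨hSdom, hS⟩, rfl⟩
  refine le_antisymm ((Nat.sInf_le hmem).trans hSA) (le_csInf ⟨_, hmem⟩ ?_)
  rintro _ ⟨D, ⟨hDdom, hD⟩, rfl⟩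
  have hdom (x : V) : Dominates G D x := hDdom x
  have hA := h.le_ncard_add D hD fun x _ _ => hdom x
  rwa [if_pos (hdom v), if_pos (hdom a)] at hA

theorem isTerminalIndepDomNumber_cycleGraph_four :
    IsTerminalIndepDomNumber (cycleGraph 4) 3 1 2 where
  le_ncard_add D hD hdom := by
    obtain ⟨F, rfl⟩ := D.toFinite.exists_finset_coe
    have key : ∀ F : Finset (Fin 4), (∀ u ∈ F, ∀ w ∈ F, ¬ (cycleGraph 4).Adj u w) →
        (0 ∈ F ∨ ∃ d ∈ F, (cycleGraph 4).Adj 0 d) → (2 ∈ F ∨ ∃ d ∈ F, (cycleGraph 4).Adj 2 d) →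
        2 ≤ F.card + (if 3 ∈ F ∨ ∃ d ∈ F, (cycleGraph 4).Adj 3 d then 0 else 1) +
          (if 1 ∈ F ∨ ∃ d ∈ F, (cycleGraph 4).Adj 1 d then 0 else 1) := by
      decide
    rw [Set.ncard_coe_finset]
    convert key F hD (hdom 0 (by decide) (by decide)) (hdom 2 (by decide) (by decide)) <;> rfl
  exists_mem_mem := by
    refine ⟨{1, 3}, ?_, ?_, by simp, by simp, by rw [Set.ncard_pair (by decide)]⟩
    · simp only [IsIndependentSet, Set.mem_insert_iff, Set.mem_singleton_iff]
      decide
    · intro x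
      fin_cases x <;> simp [Dominates] <;> decide
  exists_notMem_mem := by
    refine ⟨{1}, ?_, ?_, by simp, by simp, by simp⟩
    · rintro u rfl w rfl; decide
    · intro x hx
      fin_cases x <;> simp_all [Dominates] <;> decide
  exists_mem_notMem := by
    refine ⟨{3}, ?_, ?_, by simp, by simp, by simp⟩
    · rintro u rfl w rfl; decide
    · intro x hx
      fin_cases x <;> simp_all [Dominates] <;> decide

section CycleFour

open scoped Classical

variable {β : Type*} {Ω : SimpleGraph β} {v a : β}

local notation "Π₄" => rootedProduct (cycleGraph 4) Ω v

theorem sum_undominated_root_le_two {D : Set (Fin 4 × β)} (hD : IsIndependentSet Π₄ D)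
    (hdom : ∀ i, Dominates Π₄ D (i, v)) :
    (∑ i, if Dominates Ω (Prod.mk i ⁻¹' D) v then 0 else 1) ≤ 2 := by
  set T := Finset.univ.filter fun j => (j, v) ∈ D
  have hT : ∀ i ∈ T, ∀ j ∈ T, ¬ (cycleGraph 4).Adj i j := by
    simp only [T, Finset.mem_filter, Finset.mem_univ, true_and]
    exact fun i hi j hj hij => hD _ hi _ hj (Or.inl ⟨rfl, rfl, hij⟩)
  calc (∑ i, if Dominates Ω (Prod.mk i ⁻¹' D) v then 0 else 1)
      = (Finset.univ.filter fun i => ¬ Dominates Ω (Prod.mk i ⁻¹' D) v).card := by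
        simp only [Finset.card_filter, ite_not]
    _ ≤ (Finset.univ.filter fun i => ∃ j ∈ T, (cycleGraph 4).Adj i j).card := by
        refine Finset.card_le_card fun i hi => ?_
        simp only [T, Finset.mem_filter, Finset.mem_univ, true_and] at hi ⊢
        exact exists_adj_of_dominates_root (hdom i) hi
    _ ≤ 2 := card_filter_exists_adj_cycleGraph_four_le_two T hT

theorem isIndependentSet_ofFibers_cycleGraph_four {W : Fin 4 → Set β}
    (hW : ∀ i, IsIndependentSet Ω (W i)) (hv : v ∉ W 0 ∧ v ∉ W 2 ∨ v ∉ W 1 ∧ v ∉ W 3) :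
    IsIndependentSet Π₄ (ofFibers W) := by
  refine isIndependentSet_ofFibers hW fun i j hij hi hj => ?_
  fin_cases i <;> fin_cases j <;> simp_all <;> exact absurd hij (by decide)

variable [Finite β] {A : ℕ}

theorem IsTerminalIndepDomNumber.le_ncard_add_rootedProduct
    (h : IsTerminalIndepDomNumber Ω v a A) (hva : v ≠ a) {D : Set (Fin 4 × β)}
    (hD : IsIndependentSet Π₄ D) (hdom : ∀ x, x ≠ (3, a) → x ≠ (1, a) → Dominates Π₄ D x) :
    4 * A - 2 ≤ D.ncard + (if Dominates Π₄ D (3, a) then 0 else 1) +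
      (if Dominates Π₄ D (1, a) then 0 else 1) := by
  have hcopy (i : Fin 4) := h.le_ncard_add (Prod.mk i ⁻¹' D) (hD.preimage_mk i) fun x hxv hxa =>
    (dominates_rootedProduct_iff_of_ne hxv).1 <| hdom (i, x) (by simp [hxa]) (by simp [hxa])
  have hroots := sum_undominated_root_le_two hD fun i =>
    hdom (i, v) (by simp [hva]) (by simp [hva])
  have ha (i : Fin 4) : Dominates Π₄ D (i, a) ↔ Dominates Ω (Prod.mk i ⁻¹' D) a :=
    dominates_rootedProduct_iff_of_ne hva.symm
  have ha0 := (ha 0).1 (hdom (0, a) (by simp) (by simp))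
  have ha2 := (ha 2).1 (hdom (2, a) (by simp) (by simp))
  have hcard : D.ncard = ∑ i, (Prod.mk i ⁻¹' D).ncard := ncard_ofFibers fun i => Prod.mk i ⁻¹' D
  rw [Fin.sum_univ_four] at hroots hcard
  have h0 := hcopy 0
  have h1 := hcopy 1
  have h2 := hcopy 2
  have h3 := hcopy 3
  simp only [if_pos ha0, if_pos ha2, ← ha 1, ← ha 3] at h0 h1 h2 h3
  omega

theorem IsTerminalIndepDomNumber.rootedProduct (h : IsTerminalIndepDomNumber Ω v a A)
    (hva : v ≠ a) : IsTerminalIndepDomNumber Π₄ (3, a) (1, a) (4 * A - 2) := by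
  obtain ⟨S, hS, hS_dom, hvS, haS, hS_card⟩ := h.exists_mem_mem
  obtain ⟨Sa, hSa, hSa_dom, hvSa, haSa, hSa_card⟩ := h.exists_notMem_mem
  obtain ⟨Sv, hSv, hSv_dom, hvSv, haSv, hSv_card⟩ := h.exists_mem_notMem
  refine ⟨fun D hD hdom => h.le_ncard_add_rootedProduct hva hD hdom, ?_, ?_, ?_⟩
  · refine ⟨ofFibers ![S, Sa, S, Sa], ?_, ?_, haSa, haSa, ?_⟩
    · exact isIndependentSet_ofFibers_cycleGraph_four
        (fun i => by fin_cases i <;> assumption) (.inr ⟨hvSa, hvSa⟩)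
    · rintro ⟨i, x⟩
      fin_cases i
      · exact (hS_dom x).rootedProduct_mk
      · exact dominates_ofFibers_of_adj (j := 0) (by decide) hvS (hSa_dom x)
      · exact (hS_dom x).rootedProduct_mk
      · exact dominates_ofFibers_of_adj (j := 0) (by decide) hvS (hSa_dom x)
    · rw [ncard_ofFibers, Fin.sum_univ_four]
      simp only [Matrix.cons_val]
      omega
  · refine ⟨ofFibers ![Sa, S, Sa, Sv], ?_, ?_, haSv, haS, ?_⟩
    · exact isIndependentSet_ofFibers_cycleGraph_four
        (fun i => by fin_cases i <;> assumption) (.inl ⟨hvSa, hvSa⟩)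
    · rintro ⟨i, x⟩ hx
      fin_cases i
      · exact dominates_ofFibers_of_adj (j := 1) (by decide) hvS (hSa_dom x)
      · exact (hS_dom x).rootedProduct_mk
      · exact dominates_ofFibers_of_adj (j := 1) (by decide) hvS (hSa_dom x)
      · exact (hSv_dom x (by rintro rfl; exact hx rfl)).rootedProduct_mk
    · rw [ncard_ofFibers, Fin.sum_univ_four]
      simp only [Matrix.cons_val]
      omega
  · refine ⟨ofFibers ![Sa, Sv, Sa, S], ?_, ?_, haS, haSv, ?_⟩
    · exact isIndependentSet_ofFibers_cycleGraph_four
        (fun i => by fin_cases i <;> assumption) (.inl ⟨hvSa, hvSa⟩)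
    · rintro ⟨i, x⟩ hx
      fin_cases i
      · exact dominates_ofFibers_of_adj (j := 1) (by decide) hvSv (hSa_dom x)
      · exact (hSv_dom x (by rintro rfl; exact hx rfl)).rootedProduct_mk
      · exact dominates_ofFibers_of_adj (j := 3) (by decide) hvS (hSa_dom x)
      · exact (hS_dom x).rootedProduct_mk
    · rw [ncard_ofFibers, Fin.sum_univ_four]
      simp only [Matrix.cons_val]
      omega

end CycleFour

instance FCNVert.finite : ∀ l, Finite (FCNVert l)
  | 0 => inferInstanceAs (Finite (Fin 4))
  | l + 1 => have := FCNVert.finite l; inferInstanceAs (Finite (Fin 4 × FCNVert l))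

theorem fcnRoot_ne_fcnAux : ∀ l, fcnRoot l ≠ fcnAux l
  | 0 => show (3 : Fin 4) ≠ 1 by decide
  | _ + 1 => fun h => absurd (congrArg Prod.fst h) (show (3 : Fin 4) ≠ 1 by decide)

theorem exists_isTerminalIndepDomNumber_FCN :
    ∀ l, ∃ A, IsTerminalIndepDomNumber (FCN l) (fcnRoot l) (fcnAux l) A
  | 0 => ⟨2, isTerminalIndepDomNumber_cycleGraph_four⟩
  | l + 1 =>
    have ⟨A, hA⟩ := exists_isTerminalIndepDomNumber_FCN l
    ⟨4 * A - 2, hA.rootedProduct (fcnRoot_ne_fcnAux l)⟩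

theorem stmt14 :
    gammaI (FCN 0) = 2 ∧ ∀ l : ℕ, gammaI (FCN (l + 1)) = 4 * gammaI (FCN l) - 2 := by
  refine ⟨isTerminalIndepDomNumber_cycleGraph_four.gammaI_eq, fun l => ?_⟩
  obtain ⟨A, hA⟩ := exists_isTerminalIndepDomNumber_FCN l
  have hA' : IsTerminalIndepDomNumber (FCN (l + 1)) (fcnRoot (l + 1)) (fcnAux (l + 1))
      (4 * A - 2) := hA.rootedProduct (fcnRoot_ne_fcnAux l)
  rw [hA'.gammaI_eq, hA.gammaI_eq]
end

section
/- The total domination number of FCN(1) equals 8. -/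
open SimpleGraph

variable {V : Type*}

/-! A total dominating set `S` whose vertices have pairwise disjoint open neighbourhoods is
minimum: any total dominating set meets each of the disjoint sets `N(s)`, `s ∈ S`, so it has at
least `|S|` elements. In `FCN 1` the eight vertices `x00`, `x01` form such a set, because their
neighbourhoods `{x01, x10}` and `{x00, x11}` stay inside the copy `x`. -/

section TotalDomination

variable {G : SimpleGraph V}

theorem IsTotalDominating.ncard_le {D S : Set V} (hD : IsTotalDominating G D) (hDfin : D.Finite)
    (hS : S.PairwiseDisjoint G.neighborSet) : S.ncard ≤ D.ncard := by
  choose f hfD hadj using hD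
  refine Set.ncard_le_ncard_of_injOn f (fun u _ => hfD u) (fun u hu w hw huw => ?_) hDfin
  exact hS.elim_set hu hw (f u) (hadj u) (huw ▸ hadj w)

theorem gammaT_eq_ncard [Finite V] {S : Set V} (hS : IsTotalDominating G S)
    (hpack : S.PairwiseDisjoint G.neighborSet) : gammaT G = S.ncard :=
  le_antisymm (Nat.sInf_le ⟨S, hS, rfl⟩)
    (le_csInf ⟨_, S, hS, rfl⟩ fun _ ⟨D, hD, hn⟩ => hn ▸ hD.ncard_le D.toFinite hpack)

end TotalDomination

section RootedProduct

variable {α β : Type*} {Γ : SimpleGraph α} {Ω : SimpleGraph β} {v : β} {T : Set β}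

theorem rootedProduct_adj_of_ne_root {p q : α × β} (hp : p.2 ≠ v) :
    (rootedProduct Γ Ω v).Adj p q ↔ p.1 = q.1 ∧ Ω.Adj p.2 q.2 := by
  simp [rootedProduct, hp]

theorem IsTotalDominating.rootedProduct_snd_preimage (hT : IsTotalDominating Ω T) :
    IsTotalDominating (rootedProduct Γ Ω v) (Prod.snd ⁻¹' T) := fun p =>
  let ⟨d, hd, hadj⟩ := hT p.2
  ⟨(p.1, d), hd, Or.inr ⟨rfl, hadj⟩⟩

theorem Set.PairwiseDisjoint.rootedProduct_snd_preimage
    (hT : T.PairwiseDisjoint Ω.neighborSet) (hv : v ∉ T) :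
    (Prod.snd ⁻¹' T).PairwiseDisjoint (rootedProduct Γ Ω v).neighborSet := by
  rw [Set.pairwiseDisjoint_iff]
  rintro p hp q hq ⟨w, hpw, hqw⟩
  rw [mem_neighborSet, rootedProduct_adj_of_ne_root (ne_of_mem_of_not_mem hp hv)] at hpw
  rw [mem_neighborSet, rootedProduct_adj_of_ne_root (ne_of_mem_of_not_mem hq hv)] at hqw
  exact Prod.ext (hpw.1.trans hqw.1.symm) (hT.elim_set hp hq w.2 hpw.2 hqw.2)

end RootedProduct

theorem isTotalDominating_cycleGraph_four : IsTotalDominating (cycleGraph 4) {0, 1} := by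
  simp only [IsTotalDominating, Set.mem_insert_iff, Set.mem_singleton_iff, exists_eq_or_imp,
    exists_eq_left]
  decide

theorem pairwiseDisjoint_neighborSet_cycleGraph_four :
    ({0, 1} : Set (Fin 4)).PairwiseDisjoint (cycleGraph 4).neighborSet := by
  simp only [Set.pairwiseDisjoint_iff, Set.mem_insert_iff, Set.mem_singleton_iff,
    forall_eq_or_imp, forall_eq, Set.Nonempty, Set.mem_inter_iff, mem_neighborSet]
  decide

theorem stmt15 : gammaT (FCN 1) = 8 := by
  show gammaT (rootedProduct (cycleGraph 4) (cycleGraph 4) (3 : Fin 4)) = 8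
  rw [gammaT_eq_ncard isTotalDominating_cycleGraph_four.rootedProduct_snd_preimage
    (pairwiseDisjoint_neighborSet_cycleGraph_four.rootedProduct_snd_preimage (by decide)),
    ← Set.univ_prod, Set.ncard_prod]
  simp
end
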